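/- Let (A,μ,α) be a Hom-alternative algebra. Then as(α(x),xy,α(z)) = as(x,y,z)·α²(x) = as(α(x),α(y),xz) for all x,y,z ∈ A. -/
import Mathlib


variable {K A : Type*} [Field K] [CharZero K] [AddCommGroup A] [Module K A]

/-- Hom-associator of a multiplication μ with twisting map α. -/
def homAs (μ : A →ₗ[K] A →ₗ[K] A) (α : A →ₗ[K] A) (x y z : A) : A :=
  μ (μ x y) (α z) - μ (α x) (μ y z)

section aux

variable (μ : A →ₗ[K] A →ₗ[K] A) (α : A →ₗ[K] A)

lemma homAs_alt12 (h1 : ∀ x y : A, homAs μ α x x y = 0) :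
    ∀ a b c : A, homAs μ α b a c = - homAs μ α a b c := by
  intro a b c
  have e := h1 (a + b) c
  have ea := h1 a c
  have eb := h1 b c
  simp only [homAs, map_add, LinearMap.add_apply] at e ea eb ⊢
  linear_combination (norm := module) e - ea - eb

lemma homAs_alt23 (h2 : ∀ x y : A, homAs μ α x y y = 0) :
    ∀ a b c : A, homAs μ α a c b = - homAs μ α a b c := by
  intro a b c
  have e := h2 a (b + c)
  have eb := h2 a b
  have ec := h2 a c
  simp only [homAs, map_add, LinearMap.add_apply] at e eb ec ⊢
  linear_combination (norm := module) e - eb - ec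

lemma homAs_alt13 (h1 : ∀ x y : A, homAs μ α x x y = 0)
    (h2 : ∀ x y : A, homAs μ α x y y = 0) :
    ∀ a b c : A, homAs μ α c b a = - homAs μ α a b c := by
  intro a b c
  rw [homAs_alt12 μ α h1 b c a, homAs_alt23 μ α h2 b a c, homAs_alt12 μ α h1 a b c]
  rw [homAs_alt12 μ α h1 b a c]
  module

lemma homAs_cyc (h1 : ∀ x y : A, homAs μ α x x y = 0)
    (h2 : ∀ x y : A, homAs μ α x y y = 0) :
    ∀ a b c : A, homAs μ α b c a = homAs μ α a b c := by
  intro a b c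
  rw [homAs_alt12 μ α h1 c b a, homAs_alt13 μ α h1 h2 a b c]
  module

/-- Hom-Teichmüller identity: holds for any multiplicative Hom-algebra. -/
lemma homTeich (hmult : ∀ x y : A, α (μ x y) = μ (α x) (α y)) :
    ∀ w x y z : A,
      homAs μ α (μ w x) (α y) (α z) - homAs μ α (α w) (μ x y) (α z)
        + homAs μ α (α w) (α x) (μ y z)
      = μ (homAs μ α w x y) (α (α z)) + μ (α (α w)) (homAs μ α x y z) := by
  intro w x y z
  simp only [homAs, hmult, map_sub, LinearMap.sub_apply]
  abel

end aux

theorem stmt8 (μ : A →ₗ[K] A →ₗ[K] A) (α : A →ₗ[K] A)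
    (hmult : ∀ x y : A, α (μ x y) = μ (α x) (α y))
    (h1 : ∀ x y : A, homAs μ α x x y = 0)
    (h2 : ∀ x y : A, homAs μ α x y y = 0)
    (h3 : ∀ x y : A, homAs μ α x y x = 0) :
    ∀ x y z : A,
      homAs μ α (α x) (μ x y) (α z) = μ (homAs μ α x y z) (α (α x)) ∧
      homAs μ α (α x) (α y) (μ x z) = μ (homAs μ α x y z) (α (α x)) := by
  have alt12 := homAs_alt12 μ α h1
  have alt23 := homAs_alt23 μ α h2
  have alt13 := homAs_alt13 μ α h1 h2
  have cyc := homAs_cyc μ α h1 h2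
  have teich := homTeich μ α hmult
  intro x y z
  -- r1 : C - A1 = L
  have r1 : homAs μ α (μ x x) (α y) (α z) - homAs μ α (α x) (μ x y) (α z)
      = μ (α (α x)) (homAs μ α x y z) := by
    have t1 := teich x x y z
    have z1 : μ (homAs μ α x x y) (α (α z)) = 0 := by simp [h1 x y]
    linear_combination (norm := module) t1 - h1 (α x) (μ y z) + z1
  -- r2 : B1 = A1 + A2 - L
  have r2 : homAs μ α (α x) (α y) (μ x z)
      = homAs μ α (α x) (μ x y) (α z) + homAs μ α (α x) (μ y x) (α z)
        - μ (α (α x)) (homAs μ α x y z) := by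
    have t2 := teich x y x z
    have z2 : μ (homAs μ α x y x) (α (α z)) = 0 := by simp [h3 x y]
    have w2 : μ (α (α x)) (homAs μ α y x z) = - μ (α (α x)) (homAs μ α x y z) := by
      rw [alt12 x y z]; simp
    have s2 := alt12 (α x) (μ x y) (α z)
    linear_combination (norm := module) t2 - s2 + w2 + z2
  -- r3 : C = A2 + B1
  have r3 : homAs μ α (μ x x) (α y) (α z)
      = homAs μ α (α x) (μ y x) (α z) + homAs μ α (α x) (α y) (μ x z) := by
    have t3 := teich y x x z
    have z3a : μ (homAs μ α y x x) (α (α z)) = 0 := by simp [h2 y x]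
    have z3b : μ (α (α y)) (homAs μ α x x z) = 0 := by simp [h1 x z]
    have s3a := alt12 (α x) (μ y x) (α z)
    have s3b := alt12 (μ x x) (α y) (α z)
    have s3c := alt12 (α x) (α y) (μ x z)
    linear_combination (norm := module) t3 - s3a + s3b - s3c + z3a + z3b
  -- r4 : A1 + B2 = R + L
  have r4 : homAs μ α (α x) (μ x y) (α z) + homAs μ α (α x) (α y) (μ z x)
      = μ (homAs μ α x y z) (α (α x)) + μ (α (α x)) (homAs μ α x y z) := by
    have t4 := teich x y z x
    have s4 := cyc (α x) (μ x y) (α z)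
    have w4 : μ (α (α x)) (homAs μ α y z x) = μ (α (α x)) (homAs μ α x y z) := by
      rw [cyc x y z]
    linear_combination (norm := module) t4 - s4 + h3 (α x) (μ y z) + w4
  -- r5 : E2 = B1 - R - L
  have r5 : homAs μ α (α x) (α z) (μ y x)
      = homAs μ α (α x) (α y) (μ x z) - μ (homAs μ α x y z) (α (α x))
        - μ (α (α x)) (homAs μ α x y z) := by
    have t5 := teich x z y x
    have s5 := alt13 (α x) (α y) (μ x z)
    have w5a : μ (homAs μ α x z y) (α (α x)) = - μ (homAs μ α x y z) (α (α x)) := by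
      rw [alt23 x y z]; simp
    have w5b : μ (α (α x)) (homAs μ α z y x) = - μ (α (α x)) (homAs μ α x y z) := by
      rw [alt13 x y z]; simp
    linear_combination (norm := module) t5 - s5 + h3 (α x) (μ z y) + w5a + w5b
  -- r6 : A1 - B2 - E2 = R
  have r6 : homAs μ α (α x) (μ x y) (α z) - homAs μ α (α x) (α y) (μ z x)
      - homAs μ α (α x) (α z) (μ y x) = μ (homAs μ α x y z) (α (α x)) := by
    have t6 := teich z x y x
    have s6a := alt13 (α x) (α y) (μ z x)
    have s6b := alt13 (α x) (μ x y) (α z)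
    have s6c := alt12 (α x) (α z) (μ y x)
    have w6a : μ (homAs μ α z x y) (α (α x)) = μ (homAs μ α x y z) (α (α x)) := by
      rw [cyc y z x, cyc x y z]
    have z6 : μ (α (α z)) (homAs μ α x y x) = 0 := by simp [h3 x y]
    linear_combination (norm := module) t6 - s6a + s6b - s6c + w6a + z6
  have hBA : homAs μ α (α x) (α y) (μ x z) = homAs μ α (α x) (μ x y) (α z) := by
    linear_combination (norm := module)
      ((2:K)⁻¹) • r1 + ((2:K)⁻¹) • r2 - ((2:K)⁻¹) • r3
  have goal1 : homAs μ α (α x) (μ x y) (α z) = μ (homAs μ α x y z) (α (α x)) := by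
    linear_combination (norm := module) r4 + r5 + r6 + hBA
  exact ⟨goal1, by rw [hBA]; exact goal1⟩
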